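/- arXiv:1507.02302 — 2 statements merged into one kernel-verified Lean document; each statement's English description precedes it below -/
import Mathlib

section
/- Let (C, J) be a site and let i : D ⥤ C be a fully faithful functor from a (small) category D, and let J_D be the induced Grothendieck topology on D (a sieve is J_D-covering iff the sieve it generates in C is J-covering). If every object X of C admits a J-covering sieve generated by morphisms whose domains lie in the essential image of i, then the functor Sh(C, J) ⥤ Sh(D, J_D) given by precomposition with i is an equivalence of categories. -/
open CategoryTheory

universe u

/-- (Comparison Lemma) Let `(C, J)` be a site, `i : D ⥤ C` a fully faithful functor such that
every object `X` of `C` admits a `J`-covering sieve generated by morphisms whose domains lie in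
the essential image of `i`.  Then, with `J_D` the induced topology on `D`, the precomposition
functor `Sh(C, J) ⥤ Sh(D, J_D)` is an equivalence. -/
theorem comparison_lemma {C D : Type u} [SmallCategory C] [SmallCategory D]
    (J : GrothendieckTopology C) (i : D ⥤ C) [i.Full] [i.Faithful]
    (h : ∀ X : C, ∃ R : Presieve X,
      (∀ ⦃Y : C⦄ (f : Y ⟶ X), R f → ∃ Z : D, Nonempty (i.obj Z ≅ Y)) ∧
        Sieve.generate R ∈ J X) :
    haveI : i.IsCoverDense J := ⟨fun X => by
      obtain ⟨R, hR, hcov⟩ := h X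
      refine J.superset_covering ?_ hcov
      rw [Sieve.generate_le_iff]
      intro Y f hf
      obtain ⟨Z, ⟨e⟩⟩ := hR f hf
      exact ⟨⟨Z, e.inv, e.hom ≫ f, by simp⟩⟩⟩
    (i.sheafPushforwardContinuous (Type u) (i.inducedTopology J) J).IsEquivalence := by
  haveI : i.IsCoverDense J := ⟨fun X => by
    obtain ⟨R, hR, hcov⟩ := h X
    refine J.superset_covering ?_ hcov
    rw [Sieve.generate_le_iff]
    intro Y f hf
    obtain ⟨Z, ⟨e⟩⟩ := hR f hf
    exact ⟨⟨Z, e.inv, e.hom ≫ f, by simp⟩⟩⟩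
  infer_instance
end

section
/- Let (C, J) be a site, i : D ⥤ C a fully faithful functor such that every object of C has a J-covering sieve generated by morphisms whose domains lie in the image of i, and let J_D be the induced topology on D. If F is a J-sheaf of sets on C, then the presheaf F ∘ i^op on D is a J_D-sheaf. -/
open CategoryTheory

universe u

/-- Let `(C, J)` be a site and `i : D ⥤ C` a fully faithful functor such that every object of `C`
has a `J`-covering sieve generated by morphisms whose domains lie in the image of `i`.  If `F` is
a `J`-sheaf of sets on `C`, then the presheaf `F ∘ i^op` on `D` is a sheaf for the induced
topology. -/
theorem pullback_sheaf_is_sheaf_for_induced_topology {C D : Type u} [SmallCategory C]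
    [SmallCategory D] (J : GrothendieckTopology C) (i : D ⥤ C) [i.Full] [i.Faithful]
    (h : ∀ X : C, ∃ R : Presieve X,
      (∀ ⦃Y : C⦄ (f : Y ⟶ X), R f → ∃ Z : D, Nonempty (i.obj Z ≅ Y)) ∧
        Sieve.generate R ∈ J X)
    (F : Cᵒᵖ ⥤ Type u) (hF : Presheaf.IsSheaf J F) :
    haveI : i.IsCoverDense J := ⟨fun X => by
      obtain ⟨R, hR, hcov⟩ := h X
      refine J.superset_covering ?_ hcov
      rw [Sieve.generate_le_iff]
      intro Y f hf
      obtain ⟨Z, ⟨e⟩⟩ := hR f hf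
      exact ⟨⟨Z, e.inv, e.hom ≫ f, by simp⟩⟩⟩
    Presheaf.IsSheaf (i.inducedTopology J) (i.op ⋙ F) := by
  haveI : i.IsCoverDense J := ⟨fun X => by
    obtain ⟨R, hR, hcov⟩ := h X
    refine J.superset_covering ?_ hcov
    rw [Sieve.generate_le_iff]
    intro Y f hf
    obtain ⟨Z, ⟨e⟩⟩ := hR f hf
    exact ⟨⟨Z, e.inv, e.hom ≫ f, by simp⟩⟩⟩
  exact i.op_comp_isSheaf (i.inducedTopology J) J ⟨F, hF⟩
end
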